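/- arXiv:1705.08778 — 2 statements merged into one kernel-verified Lean document; each statement's English description precedes it below -/
import Mathlib

section
/- Assume g : ℝ → ℝ is continuous and (H2) holds: there exist constants A₀ > 0 and M₀ > 0 such that g(x)/x ≥ A₀ for all |x| ≥ M₀. Then there exists c₀ > 0 such that for every c ≥ c₀ there exist unique positive numbers h(c) > 0 and h₁(c) > 0 with G(h(c)) = c and G(−h₁(c)) = c; equivalently, the level curve {(x,y) : y²/2 + G(x) = c} intersects the x-axis in exactly the two points (h(c), 0) and (−h₁(c), 0). -/
/-!
By (H2), `G' = g` is at least `A₀ M₀` on `[M₀, ∞)` and at most `-A₀ M₀` on `(-∞, -M₀]`, so `G`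
grows at least linearly and strictly monotonically away from `[-M₀, M₀]` on both sides. Once `c`
exceeds the maximum of `G` on `[-M₀, M₀]`, the equation `G x = c` has no solution there, and
exactly one on each side of it by the intermediate value theorem and strict monotonicity.
-/

open Real Filter Set Topology

/-- `Gfun g x = ∫₀ˣ g(u) du`. -/
noncomputable def Gfun (g : ℝ → ℝ) (x : ℝ) : ℝ := ∫ u in (0:ℝ)..x, g u

theorem hasDerivAt_Gfun {g : ℝ → ℝ} (hg : Continuous g) (x : ℝ) :
    HasDerivAt (Gfun g) (g x) x :=
  intervalIntegral.integral_hasDerivAt_right (hg.intervalIntegrable 0 x)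
    (hg.stronglyMeasurableAtFilter _ _) hg.continuousAt

theorem mul_le_of_le_div_of_le {A M x y : ℝ} (hA : 0 ≤ A) (hM : 0 < M) (hMx : M ≤ x)
    (h : A ≤ y / x) : A * M ≤ y :=
  (mul_le_mul_of_nonneg_left hMx hA).trans ((le_div_iff₀ (hM.trans_le hMx)).1 h)

section GrowthCondition

variable {g : ℝ → ℝ} {A M : ℝ}

theorem mul_le_deriv_Gfun (hg : Continuous g) (hA : 0 ≤ A) (hM : 0 < M)
    (hH2 : ∀ x, M ≤ |x| → A ≤ g x / x) (x : ℝ) (hx : M < x) : A * M ≤ deriv (Gfun g) x := by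
  rw [(hasDerivAt_Gfun hg x).deriv]
  exact mul_le_of_le_div_of_le hA hM hx.le (hH2 x (hx.le.trans (le_abs_self x)))

theorem mul_le_deriv_Gfun_neg (hg : Continuous g) (hA : 0 ≤ A) (hM : 0 < M)
    (hH2 : ∀ x, M ≤ |x| → A ≤ g x / x) (x : ℝ) (hx : M < x) :
    A * M ≤ deriv (fun x => Gfun g (-x)) x := by
  rw [deriv_comp_neg, (hasDerivAt_Gfun hg _).deriv]
  refine mul_le_of_le_div_of_le hA hM hx.le ?_
  rw [neg_div, ← div_neg]
  exact hH2 (-x) (by rw [abs_neg]; exact hx.le.trans (le_abs_self x))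

end GrowthCondition

section DerivBoundedBelow

variable {F : ℝ → ℝ} {M δ : ℝ}

theorem strictMonoOn_Ici_of_le_deriv (hF : Differentiable ℝ F) (hδ : 0 < δ)
    (hF' : ∀ x, M < x → δ ≤ deriv F x) : StrictMonoOn F (Ici M) :=
  strictMonoOn_of_deriv_pos (convex_Ici M) hF.continuous.continuousOn fun x hx =>
    hδ.trans_le (hF' x (by rwa [interior_Ici] at hx))

theorem tendsto_atTop_of_le_deriv (hF : Differentiable ℝ F) (hδ : 0 < δ)
    (hF' : ∀ x, M < x → δ ≤ deriv F x) : Tendsto F atTop atTop := by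
  have hgrowth : ∀ x, M ≤ x → F M + δ * (x - M) ≤ F x := fun x hx => by
    have := (convex_Ici M).mul_sub_le_image_sub_of_le_deriv hF.continuous.continuousOn
      hF.differentiableOn (by simpa [interior_Ici] using hF') M self_mem_Ici x hx hx
    linarith
  refine tendsto_atTop_mono' _ ((eventually_ge_atTop M).mono hgrowth) ?_
  exact tendsto_atTop_add_const_left _ _
    ((tendsto_atTop_add_const_right _ _ tendsto_id).const_mul_atTop hδ)

theorem existsUnique_pos_eq_of_le_deriv (hF : Differentiable ℝ F) (hδ : 0 < δ)
    (hF' : ∀ x, M < x → δ ≤ deriv F x) (hM : 0 ≤ M) {c : ℝ} (hc : ∀ x ∈ Icc 0 M, F x < c) :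
    ∃! x, 0 < x ∧ F x = c := by
  have hFM : F M < c := hc M ⟨hM, le_rfl⟩
  obtain ⟨x, hx, hFx⟩ := intermediate_value_Ici hF.continuous.continuousOn
    (tendsto_atTop_of_le_deriv hF hδ hF') hFM.le
  have hMx : M < x := hx.lt_of_ne (by rintro rfl; exact hFM.ne hFx)
  refine ⟨x, ⟨hM.trans_lt hMx, hFx⟩, fun y ⟨hy, hFy⟩ => ?_⟩
  have hMy : M ≤ y := le_of_not_ge fun hyM => (hc y ⟨hy.le, hyM⟩).ne hFy
  exact (strictMonoOn_Ici_of_le_deriv hF hδ hF').injOn hMy hMx.le (hFy.trans hFx.symm)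

end DerivBoundedBelow

theorem setOf_level_curve_inter_axis_eq_pair {G : ℝ → ℝ} {c h h₁ : ℝ} (hG0 : G 0 ≠ c)
    (hGh : G h = c) (hGh₁ : G (-h₁) = c) (huniq : ∀ x, 0 < x → G x = c → x = h)
    (huniq₁ : ∀ x, 0 < x → G (-x) = c → x = h₁) :
    {q : ℝ × ℝ | q.2 ^ 2 / 2 + G q.1 = c ∧ q.2 = 0} = {(h, 0), (-h₁, 0)} := by
  ext ⟨x, y⟩
  simp only [mem_ofPred_eq, mem_insert_iff, mem_singleton_iff, Prod.mk.injEq]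
  constructor
  · rintro ⟨hxy, rfl⟩
    have hGx : G x = c := by simpa using hxy
    rcases lt_trichotomy x 0 with hx | rfl | hx
    · exact Or.inr ⟨by rw [← huniq₁ (-x) (neg_pos.2 hx) (by rwa [neg_neg]), neg_neg], rfl⟩
    · exact absurd hGx hG0
    · exact Or.inl ⟨huniq x hx hGx, rfl⟩
  · rintro (⟨rfl, rfl⟩ | ⟨rfl, rfl⟩) <;> simpa

/-- Under (H2), there exists `c₀ > 0` such that for every `c ≥ c₀`
there are unique `h(c) > 0` and `h₁(c) > 0` with `G(h(c)) = c` and `G(-h₁(c)) = c`;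
equivalently, the level curve `{(x,y) : y²/2 + G(x) = c}` meets the `x`-axis exactly
at the two points `(h(c), 0)` and `(-h₁(c), 0)`. -/
theorem level_curve_meets_x_axis_twice
    (g : ℝ → ℝ) (hg : Continuous g)
    (A₀ M₀ : ℝ) (hA₀ : 0 < A₀) (hM₀ : 0 < M₀)
    (hH2 : ∀ x : ℝ, M₀ ≤ |x| → A₀ ≤ g x / x) :
    ∃ c₀ : ℝ, 0 < c₀ ∧ ∀ c : ℝ, c₀ ≤ c →
      ∃ h h₁ : ℝ, 0 < h ∧ 0 < h₁ ∧
        Gfun g h = c ∧ Gfun g (-h₁) = c ∧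
        (∀ h' : ℝ, 0 < h' → Gfun g h' = c → h' = h) ∧
        (∀ h₁' : ℝ, 0 < h₁' → Gfun g (-h₁') = c → h₁' = h₁) ∧
        {q : ℝ × ℝ | q.2 ^ 2 / 2 + Gfun g q.1 = c ∧ q.2 = 0} =
          {(h, 0), (-h₁, 0)} := by
  have hG : Differentiable ℝ (Gfun g) := fun x => (hasDerivAt_Gfun hg x).differentiableAt
  obtain ⟨z, -, hz⟩ := isCompact_Icc.exists_isMaxOn (nonempty_Icc.2 (neg_le_self hM₀.le))
    hG.continuous.continuousOn
  refine ⟨max (Gfun g z) 0 + 1, by positivity, fun c hc => ?_⟩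
  have hlt : ∀ x ∈ Icc (-M₀) M₀, Gfun g x < c := fun x hx =>
    (hz hx).trans_lt (by linarith [le_max_left (Gfun g z) 0])
  obtain ⟨h, ⟨hpos, hGh⟩, huniq⟩ := existsUnique_pos_eq_of_le_deriv hG (mul_pos hA₀ hM₀)
    (mul_le_deriv_Gfun hg hA₀.le hM₀ hH2) hM₀.le fun x hx => hlt x ⟨by linarith [hx.1], hx.2⟩
  obtain ⟨h₁, ⟨hpos₁, hGh₁⟩, huniq₁⟩ := existsUnique_pos_eq_of_le_deriv
    (hG.comp differentiable_neg) (mul_pos hA₀ hM₀) (mul_le_deriv_Gfun_neg hg hA₀.le hM₀ hH2)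
    hM₀.le
    fun x hx => hlt (-x) ⟨neg_le_neg hx.2, by linarith [hx.1]⟩
  have huniq : ∀ x, 0 < x → Gfun g x = c → x = h := fun x hx hGx => huniq x ⟨hx, hGx⟩
  have huniq₁ : ∀ x, 0 < x → Gfun g (-x) = c → x = h₁ := fun x hx hGx => huniq₁ x ⟨hx, hGx⟩
  exact ⟨h, h₁, hpos, hpos₁, hGh, hGh₁, huniq, huniq₁,
    setOf_level_curve_inter_axis_eq_pair (hlt 0 ⟨by linarith, hM₀.le⟩).ne hGh hGh₁ huniq huniq₁⟩
end

section
/- Assume g : ℝ → ℝ is continuous and (H2) holds: there exist constants A₀ > 0 and M₀ > 0 such that g(x)/x ≥ A₀ for all |x| ≥ M₀. Then for every R > 0 there exists c_R > 0 such that for all c ≥ c_R, every point (x, y) of the level set Γ_c = {(x,y) : y²/2 + G(x) = c} satisfies x² + y² ≥ R². In particular, the distance from Γ_c to the origin tends to infinity as c → ∞. -/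
open Real Filter Set Topology Metric

/-- The energy `V(x,y) = y²/2 + G(x)`; the level curve `Γ_c` is `{q | Vfun g q = c}`. -/
noncomputable def Vfun (g : ℝ → ℝ) (q : ℝ × ℝ) : ℝ := q.2 ^ 2 / 2 + Gfun g q.1

lemma continuous_Gfun (g : ℝ → ℝ) (hg : Continuous g) : Continuous (Gfun g) := by
  exact intervalIntegral.continuous_primitive (fun a b => hg.intervalIntegrable a b) 0

lemma continuous_Vfun (g : ℝ → ℝ) (hg : Continuous g) : Continuous (Vfun g) := by
  unfold Vfun
  exact (((continuous_snd.pow 2).div_const 2).add ((continuous_Gfun g hg).comp continuous_fst))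

/-- Under (H2), for every `R > 0` there is `c_R > 0` such that for
all `c ≥ c_R` every point of the level set `Γ_c` satisfies `x² + y² ≥ R²`; in
particular the distance from `Γ_c` to the origin tends to infinity as `c → ∞`. -/
theorem level_curves_escape_to_infinity
    (g : ℝ → ℝ) (hg : Continuous g)
    (A₀ M₀ : ℝ) (hA₀ : 0 < A₀) (hM₀ : 0 < M₀)
    (hH2 : ∀ x : ℝ, M₀ ≤ |x| → A₀ ≤ g x / x) :
    (∀ R : ℝ, 0 < R → ∃ cR : ℝ, 0 < cR ∧ ∀ c : ℝ, cR ≤ c →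
      ∀ q : ℝ × ℝ, Vfun g q = c → R ^ 2 ≤ q.1 ^ 2 + q.2 ^ 2) ∧
    Tendsto (fun c : ℝ => infDist (0 : ℝ × ℝ) {q : ℝ × ℝ | Vfun g q = c})
      atTop atTop := by
  have hV : Continuous (Vfun g) := continuous_Vfun g hg
  -- main part
  have key : ∀ R : ℝ, 0 < R → ∃ cR : ℝ, 0 < cR ∧ ∀ c : ℝ, cR ≤ c →
      ∀ q : ℝ × ℝ, Vfun g q = c → R ^ 2 ≤ q.1 ^ 2 + q.2 ^ 2 := by
    intro R hR
    set S : Set (ℝ × ℝ) := {q | q.1 ^ 2 + q.2 ^ 2 ≤ R ^ 2} with hS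
    have hSclosed : IsClosed S := by
      have : S = (fun q : ℝ × ℝ => q.1 ^ 2 + q.2 ^ 2) ⁻¹' Iic (R ^ 2) := rfl
      rw [this]
      exact IsClosed.preimage (by continuity) isClosed_Iic
    have hSbdd : Bornology.IsBounded S := by
      apply Bornology.IsBounded.subset (Metric.isBounded_closedBall (x := (0:ℝ×ℝ)) (r := R))
      intro q hq
      simp only [S, mem_setOf_eq] at hq
      rw [Metric.mem_closedBall, Prod.dist_eq]
      have h1 : |q.1| ≤ R := by
        rw [abs_le]; constructor <;> nlinarith [sq_nonneg q.2]
      have h2 : |q.2| ≤ R := by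
        rw [abs_le]; constructor <;> nlinarith [sq_nonneg q.1]
      simp [Real.dist_eq]
      exact ⟨h1, h2⟩
    have hScpt : IsCompact S := Metric.isCompact_of_isClosed_isBounded hSclosed hSbdd
    have hSne : S.Nonempty := ⟨(0, 0), by simp [S]; positivity⟩
    obtain ⟨q₀, hq₀S, hq₀max⟩ := hScpt.exists_isMaxOn hSne hV.continuousOn
    refine ⟨max (Vfun g q₀) 0 + 1, by positivity, fun c hc q hqc => ?_⟩
    by_contra hcon
    push_neg at hcon
    have hqS : q ∈ S := le_of_lt hcon
    have := hq₀max hqS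
    have : Vfun g q ≤ max (Vfun g q₀) 0 := le_trans this (le_max_left _ _)
    rw [hqc] at this
    linarith
  refine ⟨key, ?_⟩
  rw [Filter.tendsto_atTop]
  intro b
  set b' : ℝ := max b 1 with hb'
  have hb'pos : 0 < b' := lt_of_lt_of_le one_pos (le_max_right _ _)
  obtain ⟨cR, hcRpos, hcR⟩ := key (Real.sqrt 2 * b') (by positivity)
  filter_upwards [eventually_ge_atTop cR] with c hc
  have hc0 : 0 ≤ c := le_trans hcRpos.le hc
  -- the level set is nonempty: take (0, √(2c))
  have hne : ({q : ℝ × ℝ | Vfun g q = c}).Nonempty := by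
    refine ⟨(0, Real.sqrt (2 * c)), ?_⟩
    simp only [mem_setOf_eq, Vfun, Gfun]
    rw [intervalIntegral.integral_same, Real.sq_sqrt (by linarith)]
    ring
  have hbound : ∀ q ∈ {q : ℝ × ℝ | Vfun g q = c}, b' ≤ dist (0 : ℝ × ℝ) q := by
    intro q hq
    have h := hcR c hc q hq
    rw [mul_pow, Real.sq_sqrt (by norm_num : (0:ℝ) ≤ 2)] at h
    rw [Prod.dist_eq]
    simp only [Real.dist_eq, Prod.fst_zero, Prod.snd_zero, zero_sub, abs_neg]
    have hm1 : |q.1| ≤ max |q.1| |q.2| := le_max_left _ _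
    have hm2 : |q.2| ≤ max |q.1| |q.2| := le_max_right _ _
    nlinarith [sq_abs q.1, sq_abs q.2, abs_nonneg q.1, abs_nonneg q.2]
  calc b ≤ b' := le_max_left _ _
    _ ≤ infDist (0 : ℝ × ℝ) {q : ℝ × ℝ | Vfun g q = c} := by
        refine le_of_not_gt fun hlt => ?_
        obtain ⟨y, hy, hdy⟩ := (infDist_lt_iff hne).mp hlt
        exact absurd hdy (not_lt.mpr (hbound y hy))
end
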